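/- arXiv:2006.01677 — 6 statements merged into one kernel-verified Lean document; each statement's English description precedes it below -/
import Mathlib

section
/- Let Λ be a noetherian ring, and call a full subcategory of the category of finitely generated Λ-modules a torsion class if it is closed under factor modules and extensions. If M is a finitely generated Λ-module such that Ext¹_Λ(M, X) = 0 for all X in Fac M (the class of factor modules of finite direct sums of copies of M), then Fac M is a torsion class, i.e., Fac M is closed under factor modules and extensions. -/
universe u v

/-- `X` belongs to `Fac M`: it is a factor module of a finite direct sum of copies of `M`
(equivalently, of a module in `add M`). -/
def IsFac (Λ : Type u) [Ring Λ] (M : Type v) [AddCommGroup M] [Module Λ M]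
    (X : Type v) [AddCommGroup X] [Module Λ X] : Prop :=
  ∃ (n : ℕ) (p : (Fin n → M) →ₗ[Λ] X), Function.Surjective p

/-- **`Fac M` is a torsion class for a presilting module.**
Let `Λ` be a noetherian ring and `M` a finitely generated `Λ`-module such that
`Ext¹_Λ(M, X) = 0` for all `X ∈ Fac M` (expressed by the splitting of every
short exact sequence `0 → X → E → M → 0` with `X ∈ Fac M`).  Then `Fac M` is a
torsion class of `mod Λ`: it is closed under factor modules and extensions. -/
theorem isFac_torsionClass (Λ : Type u) [Ring Λ] [IsNoetherianRing Λ]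
    (M : Type v) [AddCommGroup M] [Module Λ M] [Module.Finite Λ M]
    -- `Ext¹_Λ(M, Fac M) = 0` : every extension of `M` by a module in `Fac M` splits
    (hExt : ∀ (X : Type v) [AddCommGroup X] [Module Λ X], IsFac Λ M X →
      ∀ (E : Type v) [AddCommGroup E] [Module Λ E],
      ∀ (i : X →ₗ[Λ] E) (p : E →ₗ[Λ] M),
        Function.Injective i → Function.Surjective p →
        LinearMap.range i = LinearMap.ker p →
        ∃ s : M →ₗ[Λ] E, p.comp s = LinearMap.id) :
    -- `Fac M` is closed under factor modules ...
    (∀ (X : Type v) [AddCommGroup X] [Module Λ X], IsFac Λ M X →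
      ∀ (Y : Type v) [AddCommGroup Y] [Module Λ Y] (q : X →ₗ[Λ] Y),
        Function.Surjective q → IsFac Λ M Y) ∧
    -- ... and closed under extensions
    (∀ (X : Type v) [AddCommGroup X] [Module Λ X], IsFac Λ M X →
      ∀ (Z : Type v) [AddCommGroup Z] [Module Λ Z], IsFac Λ M Z →
      ∀ (Y : Type v) [AddCommGroup Y] [Module Λ Y]
        (i : X →ₗ[Λ] Y) (p : Y →ₗ[Λ] Z),
        Function.Injective i → Function.Surjective p →
        LinearMap.range i = LinearMap.ker p →
        IsFac Λ M Y) := by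
  constructor
  · rintro X _ _ ⟨n, p, hp⟩ Y _ _ q hq
    exact ⟨n, q.comp p, hq.comp hp⟩
  · rintro X _ _ hX Z _ _ ⟨n, qn, hqn⟩ Y _ _ i p hi hp hker
    obtain ⟨k, r, hr⟩ := hX
    -- pullback of `qn ∘ single j : M → Z` and `p : Y → Z`
    set D : Fin n → (M × Y →ₗ[Λ] Z) := fun j =>
      qn ∘ₗ (LinearMap.single Λ (fun _ : Fin n => M) j) ∘ₗ LinearMap.fst Λ M Y
        - p ∘ₗ LinearMap.snd Λ M Y with hD
    set E : Fin n → Submodule Λ (M × Y) := fun j => LinearMap.ker (D j) with hE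
    have memE : ∀ (j : Fin n) (v : M × Y), v ∈ E j ↔ qn (Pi.single j v.1) = p v.2 := by
      intro j v
      simp [hE, hD, LinearMap.mem_ker, sub_eq_zero, LinearMap.single_apply]
    have hiX : ∀ x : X, p (i x) = 0 := by
      intro x
      have : i x ∈ LinearMap.ker p := hker ▸ LinearMap.mem_range_self i x
      simpa [LinearMap.mem_ker] using this
    -- the injection X → E j
    set ι : ∀ j : Fin n, X →ₗ[Λ] E j := fun j =>
      LinearMap.codRestrict (E j) (LinearMap.prod 0 i) (by
        intro x
        rw [memE]
        simp [hiX]) with hι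
    -- the projection E j → M
    set π : ∀ j : Fin n, (E j →ₗ[Λ] M) := fun j =>
      (LinearMap.fst Λ M Y).comp (E j).subtype with hπ
    have hιinj : ∀ j, Function.Injective (ι j) := by
      intro j a b hab
      apply hi
      have := congrArg (fun e : E j => (e : M × Y).2) hab
      simpa [hι] using this
    have hπsurj : ∀ j, Function.Surjective (π j) := by
      intro j m
      obtain ⟨y, hy⟩ := hp (qn (Pi.single j m))
      exact ⟨⟨(m, y), (memE j (m, y)).2 hy.symm⟩, rfl⟩
    have hrk : ∀ j, LinearMap.range (ι j) = LinearMap.ker (π j) := by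
      intro j
      ext e
      constructor
      · rintro ⟨x, rfl⟩
        simp [hι, hπ, LinearMap.mem_ker]
      · intro he
        have h1 : (e : M × Y).1 = 0 := he
        have h2 : p (e : M × Y).2 = 0 := by
          have := (memE j (e : M × Y)).1 e.2
          rw [h1] at this
          simpa using this.symm
        have : (e : M × Y).2 ∈ LinearMap.range i := by
          rw [hker]; exact h2
        obtain ⟨x, hx⟩ := this
        refine ⟨x, ?_⟩
        apply Subtype.ext
        apply Prod.ext
        · simpa [hι] using h1.symm
        · simpa [hι] using hx
    -- split each pullback using the Ext vanishing hypothesis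
    choose s hs using fun j => hExt X ⟨k, r, hr⟩ (E j) (ι j) (π j) (hιinj j) (hπsurj j) (hrk j)
    -- assemble the section S : M^n → Y
    set S : (Fin n → M) →ₗ[Λ] Y :=
      ∑ j : Fin n, (LinearMap.snd Λ M Y ∘ₗ (E j).subtype ∘ₗ s j) ∘ₗ
        LinearMap.proj j with hS
    have hfst : ∀ (j : Fin n) (m : M), ((s j m : E j) : M × Y).1 = m := by
      intro j m
      have := congrFun (congrArg DFunLike.coe (hs j)) m
      simpa [hπ] using this
    have hpS : ∀ b : Fin n → M, p (S b) = qn b := by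
      intro b
      have h1 : p (S b) = ∑ j : Fin n, p ((s j (b j) : M × Y)).2 := by
        simp [hS, LinearMap.sum_apply, map_sum]
      have h2 : ∀ j : Fin n, p ((s j (b j) : M × Y)).2 = qn (Pi.single j (b j)) := by
        intro j
        have hm := (memE j ((s j (b j) : M × Y))).1 (s j (b j)).2
        rw [hfst j (b j)] at hm
        exact hm.symm
      rw [h1]
      simp_rw [h2]
      rw [← map_sum]
      congr 1
      exact Finset.univ_sum_single b
    -- the total surjection M^(k+n) → Y
    refine ⟨k + n, i ∘ₗ r ∘ₗ LinearMap.funLeft Λ M (Fin.castAdd n)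
      + S ∘ₗ LinearMap.funLeft Λ M (Fin.natAdd k), ?_⟩
    intro y
    obtain ⟨b, hb⟩ := hqn (p y)
    have hyb : y - S b ∈ LinearMap.range i := by
      rw [hker, LinearMap.mem_ker, map_sub, hpS, hb, sub_self]
    obtain ⟨x, hx⟩ := hyb
    obtain ⟨a, ha⟩ := hr x
    refine ⟨fun t => Sum.elim a b (finSumFinEquiv.symm t), ?_⟩
    have hca : (LinearMap.funLeft Λ M (Fin.castAdd n))
        (fun t => Sum.elim a b (finSumFinEquiv.symm t)) = a := by
      funext t; simp [LinearMap.funLeft_apply]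
    have hna : (LinearMap.funLeft Λ M (Fin.natAdd k))
        (fun t => Sum.elim a b (finSumFinEquiv.symm t)) = b := by
      funext t; simp [LinearMap.funLeft_apply]
    simp only [LinearMap.add_apply, LinearMap.comp_apply]
    rw [hca, hna, ha, hx]
    abel
end

section
/- Let Λ be a ring and M a finitely presented faithful Λ-module with minimal projective presentation P₋₁ → P₀ → M → 0, such that every morphism P₋₁ → N with N ∈ add M factors through the map P₋₁ → P₀ (the presilting condition). Then the projective dimension of M is at most one; more precisely, the map d : P₋₁ → P₀ in the minimal projective presentation is a monomorphism. -/
/-- **A faithful presilting module has projective dimension at most one.**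
Let `Λ` be a ring and `M` a finitely presented faithful `Λ`-module with a (minimal)
projective presentation `P₁ --d--> P₀ --π--> M → 0` by finitely generated projective
modules, satisfying the presilting condition: every morphism from `P₁` to a module in
`add M` factors through `d`.  Then `d` is a monomorphism; in particular `M` has
projective dimension at most one. -/
theorem faithful_presilting_pd_le_one
    (Λ : Type*) [Ring Λ]
    (M : Type*) [AddCommGroup M] [Module Λ M] [Module.Finite Λ M]
    -- `M` is faithful
    (hfaithful : ∀ a : Λ, (∀ m : M, a • m = 0) → a = 0)
    (P₁ P₀ : Type*)
    [AddCommGroup P₁] [Module Λ P₁] [Module.Finite Λ P₁] [Module.Projective Λ P₁]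
    [AddCommGroup P₀] [Module Λ P₀] [Module.Finite Λ P₀] [Module.Projective Λ P₀]
    (d : P₁ →ₗ[Λ] P₀) (π : P₀ →ₗ[Λ] M)
    (hπ : Function.Surjective π)
    (hexact : LinearMap.range d = LinearMap.ker π)
    -- the presilting condition: every morphism `P₁ → N` with `N ∈ add M`
    -- factors through `d` (it suffices to consider `N = Mⁿ`)
    (hpresilt : ∀ (n : ℕ) (g : P₁ →ₗ[Λ] (Fin n → M)),
      ∃ h : (P₀ →ₗ[Λ] (Fin n → M)), h.comp d = g) :
    Function.Injective d := by
  refine (injective_iff_map_eq_zero d).mpr ?_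
  intro x hx
  by_contra hne
  obtain ⟨s, hs⟩ := Module.projective_def'.mp ‹Module.Projective Λ P₁›
  have hsx : s x ≠ 0 := by
    intro h0
    apply hne
    have := congrArg (fun f : P₁ →ₗ[Λ] P₁ => f x) hs
    simpa [h0] using this.symm
  obtain ⟨p₀, hp₀⟩ : ∃ p₀, (s x) p₀ ≠ 0 := by
    by_contra h
    push_neg at h
    exact hsx (Finsupp.ext h)
  obtain ⟨m, hm⟩ : ∃ m : M, (s x) p₀ • m ≠ 0 := by
    by_contra h
    push_neg at h
    exact hp₀ (hfaithful _ h)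
  let g : P₁ →ₗ[Λ] (Fin 1 → M) :=
    LinearMap.pi fun _ => (LinearMap.toSpanSingleton Λ M m).comp
      ((Finsupp.lapply p₀).comp s)
  obtain ⟨h, hh⟩ := hpresilt 1 g
  have hg0 : g x = 0 := by
    rw [← hh]
    simp [LinearMap.comp_apply, hx]
  have := congrFun hg0 0
  simp only [g, LinearMap.pi_apply, LinearMap.comp_apply, Finsupp.lapply_apply,
    LinearMap.toSpanSingleton_apply, Pi.zero_apply] at this
  exact hm this
end

section
/- Let Λ be a ring, M a finitely presented Λ-module, and I = ann_Λ(M) its annihilator. If M is a silting Λ-module (i.e., M = H⁰(P) up to additive equivalence for a 2-term silting complex P in K^b(proj Λ)), then M is a tilting Λ/I-module: M has projective dimension at most one over Λ/I, Ext¹_{Λ/I}(M,M) = 0, and there exists an exact sequence 0 → Λ/I → M₀ → M₁ → 0 with M₀, M₁ ∈ add M. -/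
universe u

/-- `M` is a (finitely presented) presilting `Λ`-module: it has a projective presentation
`P₁ --d--> P₀ → M → 0` by finitely generated projectives such that every morphism
from `P₁` to a module in `add M` factors through `d` (equivalently,
`Hom_K(P, P[1]) = 0` for the associated 2-term complex `P`). -/
def IsPresiltingModule (Λ : Type u) [Ring Λ] (M : Type u) [AddCommGroup M] [Module Λ M] :
    Prop :=
  ∃ (P₁ P₀ : ModuleCat.{u} Λ), Module.Projective Λ P₁ ∧ Module.Projective Λ P₀ ∧
    Module.Finite Λ P₁ ∧ Module.Finite Λ P₀ ∧
    ∃ (d : P₁ →ₗ[Λ] P₀) (π : P₀ →ₗ[Λ] M), Function.Surjective π ∧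
      LinearMap.range d = LinearMap.ker π ∧
      ∀ (n : ℕ) (g : P₁ →ₗ[Λ] (Fin n → M)), ∃ h : P₀ →ₗ[Λ] (Fin n → M), h.comp d = g

/-- `M` is a silting `Λ`-module: `M` is presilting and there is an exact sequence
`Λ --f--> M₀ → M₁ → 0` where `f` is a left `add M`-approximation and `M₀, M₁ ∈ add M`
(we normalize `M₀ = Mⁿ` and realize `M₁` as the image of an idempotent on `Mᵐ`).
This is equivalent to `add M = add H⁰(P)` for a 2-term silting complex `P` in
`K^b(proj Λ)`. -/
def IsSiltingModule (Λ : Type u) [Ring Λ] (M : Type u) [AddCommGroup M] [Module Λ M] :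
    Prop :=
  IsPresiltingModule Λ M ∧
  ∃ (n m : ℕ) (f : Λ →ₗ[Λ] (Fin n → M)) (g : (Fin n → M) →ₗ[Λ] (Fin m → M))
      (e : (Fin m → M) →ₗ[Λ] (Fin m → M)),
    e.comp e = e ∧ LinearMap.range g = LinearMap.range e ∧
    LinearMap.ker g = LinearMap.range f ∧
    ∀ (k : ℕ) (h : Λ →ₗ[Λ] (Fin k → M)),
      ∃ u : (Fin n → M) →ₗ[Λ] (Fin k → M), u.comp f = h

/-- `M` is a tilting `Γ`-module: `M` has projective dimension at most one,
`Ext¹_Γ(M, M) = 0`, and there is an exact sequence `0 → Γ → M₀ → M₁ → 0`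
with `M₀, M₁ ∈ add M`. -/
def IsTiltingModule (Γ : Type u) [Ring Γ] (M : Type u) [AddCommGroup M] [Module Γ M] :
    Prop :=
  -- projective dimension at most one, witnessed by a finite projective resolution,
  -- together with `Ext¹_Γ(M,M) = 0` (extensions against `add M` lift along `d`)
  (∃ (Q₁ Q₀ : ModuleCat.{u} Γ), Module.Projective Γ Q₁ ∧ Module.Projective Γ Q₀ ∧
    Module.Finite Γ Q₁ ∧ Module.Finite Γ Q₀ ∧
    ∃ (d : Q₁ →ₗ[Γ] Q₀) (π : Q₀ →ₗ[Γ] M), Function.Injective d ∧ Function.Surjective π ∧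
      LinearMap.range d = LinearMap.ker π ∧
      ∀ (n : ℕ) (g : Q₁ →ₗ[Γ] (Fin n → M)), ∃ h : Q₀ →ₗ[Γ] (Fin n → M), h.comp d = g) ∧
  -- coresolution `0 → Γ → M₀ → M₁ → 0` with `M₀, M₁ ∈ add M`
  (∃ (n m : ℕ) (i : Γ →ₗ[Γ] (Fin n → M)) (q : (Fin n → M) →ₗ[Γ] (Fin m → M))
      (e : (Fin m → M) →ₗ[Γ] (Fin m → M)),
    e.comp e = e ∧ LinearMap.range q = LinearMap.range e ∧
    Function.Injective i ∧ LinearMap.range i = LinearMap.ker q)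

/-!
Reducing a presilting presentation `P₁ → P₀ → M → 0` modulo `I = ann M` gives a presentation
of `M` over `Γ = Λ/I` by finitely generated projectives in which every map `P₁/IP₁ → Mᵏ` still
factors through the differential. The left `add M`-approximation `f : Λ → Mⁿ` kills only
elements of `I`, so `Γ` embeds into `Mⁿ`. Projective modules are torsionless, hence they embed
into products of copies of `Mⁿ`, and the factorisation property forces the reduced differential
to be injective: this is `pd M ≤ 1` together with `Ext¹(M, M) = 0`. The approximation sequence
`Λ → Mⁿ → M₁ → 0` becomes `0 → Γ → Mⁿ → M₁ → 0`.
-/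

open Function

namespace LinearMap

variable {Λ Γ : Type*} [Ring Λ] [Ring Γ] (φ : Λ →+* Γ)
  {X Y : Type*} [AddCommGroup X] [Module Λ X] [Module Γ X] [AddCommGroup Y] [Module Λ Y]
  [Module Γ Y] (hX : ∀ (a : Λ) (x : X), φ a • x = a • x)
  (hY : ∀ (a : Λ) (y : Y), φ a • y = a • y)

def extendScalarsAlong (hφ : Surjective φ) (f : X →ₗ[Λ] Y) : X →ₗ[Γ] Y where
  toFun := f
  map_add' := map_add f
  map_smul' γ x := by
    obtain ⟨a, rfl⟩ := hφ γ
    rw [RingHom.id_apply, hX, hY, map_smul]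

@[simp]
theorem coe_extendScalarsAlong (hφ : Surjective φ) (f : X →ₗ[Λ] Y) :
    ⇑(f.extendScalarsAlong φ hX hY hφ) = f :=
  rfl

def restrictScalarsAlong (f : X →ₗ[Γ] Y) : X →ₗ[Λ] Y where
  toFun := f
  map_add' := map_add f
  map_smul' a x := by rw [RingHom.id_apply, ← hX, map_smul, hY]

end LinearMap

theorem Module.Finite.of_ringHom_smul_eq {Λ Γ : Type*} [Ring Λ] [Ring Γ] (φ : Λ →+* Γ)
    {X : Type*} [AddCommGroup X] [Module Λ X] [Module Γ X]
    (hX : ∀ (a : Λ) (x : X), φ a • x = a • x) [Module.Finite Λ X] : Module.Finite Γ X := by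
  obtain ⟨S, hS⟩ := Module.Finite.fg_top (R := Λ) (M := X)
  refine ⟨⟨S, Submodule.eq_top_iff'.mpr fun x => ?_⟩⟩
  have hx : x ∈ Submodule.span Λ (S : Set X) := hS ▸ trivial
  induction hx using Submodule.span_induction with
  | mem y hy => exact Submodule.subset_span hy
  | zero => exact zero_mem _
  | add y z _ _ hy hz => exact add_mem hy hz
  | smul a y _ hy => exact hX a y ▸ Submodule.smul_mem _ _ hy

theorem LinearMap.injective_of_forall_exists_comp_eq {R M P Q : Type*} [Ring R]
    [AddCommGroup M] [Module R M] [AddCommGroup P] [Module R P] [Module.Projective R P]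
    [AddCommGroup Q] [Module R Q] {ι : R →ₗ[R] M} (hι : Injective ι) {δ : P →ₗ[R] Q}
    (hfact : ∀ g : P →ₗ[R] M, ∃ h : Q →ₗ[R] M, h ∘ₗ δ = g) : Injective δ := by
  refine (injective_iff_map_eq_zero δ).mpr fun x hx => ?_
  refine (Module.forall_dual_apply_eq_zero_iff R x).mp fun f => hι ?_
  obtain ⟨h, hh⟩ := hfact (ι ∘ₗ f)
  rw [map_zero, ← LinearMap.comp_apply, ← hh, LinearMap.comp_apply, hx, map_zero]

namespace RingHom

variable {Λ Γ : Type*} [Ring Λ] [Ring Γ] (φ : Λ →+* Γ)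

/-- `P ⧸ IP ≅ Γ ⊗_Λ P` for `I = ker φ`: the base change of `P` along `φ`. -/
def Reduction (P : Type*) [AddCommGroup P] [Module Λ P] : Type _ :=
  P ⧸ (RingHom.ker φ • ⊤ : Submodule Λ P)

namespace Reduction

variable {P P' : Type*} [AddCommGroup P] [Module Λ P] [AddCommGroup P'] [Module Λ P']

instance : AddCommGroup (φ.Reduction P) :=
  inferInstanceAs (AddCommGroup (P ⧸ _))

instance : Module Λ (φ.Reduction P) :=
  inferInstanceAs (Module Λ (P ⧸ _))

def mk : P →ₗ[Λ] φ.Reduction P :=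
  Submodule.mkQ _

theorem mk_surjective : Surjective (mk φ (P := P)) :=
  Submodule.mkQ_surjective _

theorem smul_eq_zero {a : Λ} (ha : φ a = 0) (x : φ.Reduction P) : a • x = 0 := by
  obtain ⟨p, rfl⟩ := mk_surjective φ x
  rw [← map_smul]
  exact (Submodule.Quotient.mk_eq_zero _).mpr (Submodule.smul_mem_smul ha trivial)

noncomputable instance [Fact (Surjective φ)] : Module Γ (φ.Reduction P) :=
  Module.compHom _ <| φ.liftOfSurjective Fact.out
    ⟨Module.toAddMonoidEnd Λ (φ.Reduction P), fun _ ha => AddMonoidHom.ext (smul_eq_zero φ ha)⟩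

variable [Fact (Surjective φ)]

theorem ringHom_smul (a : Λ) (x : φ.Reduction P) : φ a • x = a • x :=
  DFunLike.congr_fun (φ.liftOfSurjective_comp_apply Fact.out
    ⟨Module.toAddMonoidEnd Λ (φ.Reduction P), fun _ ha => AddMonoidHom.ext (smul_eq_zero φ ha)⟩ a) x

theorem hom_ext {Y : Type*} [AddCommGroup Y] [Module Γ Y] {f g : φ.Reduction P →ₗ[Γ] Y}
    (h : ∀ p, f (mk φ p) = g (mk φ p)) : f = g :=
  LinearMap.ext fun x => by
    obtain ⟨p, rfl⟩ := mk_surjective φ x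
    exact h p

variable {Y : Type*} [AddCommGroup Y] [Module Λ Y] [Module Γ Y]
  (hY : ∀ (a : Λ) (y : Y), φ a • y = a • y)

noncomputable def lift (f : P →ₗ[Λ] Y) : φ.Reduction P →ₗ[Γ] Y :=
  LinearMap.extendScalarsAlong φ (ringHom_smul φ) hY Fact.out <|
    Submodule.liftQ _ f <| Submodule.smul_le.mpr fun a ha p _ => by
      rw [LinearMap.mem_ker, map_smul, ← hY, RingHom.mem_ker.mp ha, zero_smul]

@[simp]
theorem lift_mk (f : P →ₗ[Λ] Y) (p : P) : lift φ hY f (mk φ p) = f p :=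
  rfl

noncomputable def map (d : P →ₗ[Λ] P') : φ.Reduction P →ₗ[Γ] φ.Reduction P' :=
  lift φ (ringHom_smul φ) (mk φ ∘ₗ d)

@[simp]
theorem map_mk (d : P →ₗ[Λ] P') (p : P) : map φ d (mk φ p) = mk φ (d p) :=
  rfl

instance [Module.Projective Λ P] : Module.Projective Γ (φ.Reduction P) := by
  refine .of_lifting_property'' fun f hf => ?_
  let _ : Module Λ (φ.Reduction P →₀ Γ) := Module.compHom _ φ
  obtain ⟨s, hs⟩ := Module.projective_lifting_property
    (f.restrictScalarsAlong φ (fun _ _ => rfl) (ringHom_smul φ)) (mk φ) hf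
  exact ⟨lift φ (fun _ _ => rfl) s, hom_ext φ fun p => LinearMap.congr_fun hs p⟩

instance [Module.Finite Λ P] : Module.Finite Γ (φ.Reduction P) :=
  have : Module.Finite Λ (φ.Reduction P) := .of_surjective _ (mk_surjective φ)
  .of_ringHom_smul_eq φ (ringHom_smul φ)

theorem range_map_eq_ker_lift {d : P →ₗ[Λ] P'} {π : P' →ₗ[Λ] Y}
    (hdπ : LinearMap.range d = LinearMap.ker π) :
    LinearMap.range (map φ d) = LinearMap.ker (lift φ hY π) := by
  apply le_antisymm
  · rintro _ ⟨x, rfl⟩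
    obtain ⟨p, rfl⟩ := mk_surjective φ x
    rw [map_mk, LinearMap.mem_ker, lift_mk, ← LinearMap.mem_ker, ← hdπ]
    exact LinearMap.mem_range_self d p
  · intro x hx
    obtain ⟨p', rfl⟩ := mk_surjective φ x
    rw [LinearMap.mem_ker, lift_mk, ← LinearMap.mem_ker, ← hdπ] at hx
    obtain ⟨p, rfl⟩ := hx
    exact ⟨mk φ p, map_mk φ d p⟩

theorem exists_comp_map_eq {d : P →ₗ[Λ] P'} (g : φ.Reduction P →ₗ[Γ] Y)
    (hfact : ∃ h : P' →ₗ[Λ] Y,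
      h ∘ₗ d = g.restrictScalarsAlong φ (ringHom_smul φ) hY ∘ₗ mk φ) :
    ∃ h : φ.Reduction P' →ₗ[Γ] Y, h ∘ₗ map φ d = g := by
  obtain ⟨h, hh⟩ := hfact
  exact ⟨lift φ hY h, hom_ext φ fun p => LinearMap.congr_fun hh p⟩

end Reduction

end RingHom

theorem Pi.ringHom_smul {Λ Γ M ι : Type*} [Ring Λ] [Ring Γ] (φ : Λ →+* Γ) [AddCommGroup M]
    [Module Λ M] [Module Γ M] (hM : ∀ (a : Λ) (x : M), φ a • x = a • x) (a : Λ)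
    (v : ι → M) : φ a • v = a • v :=
  funext fun i => hM a (v i)

theorem IsPresiltingModule.reduction {Λ Γ M : Type u} [Ring Λ] [Ring Γ] (φ : Λ →+* Γ)
    [Fact (Surjective φ)] [AddCommGroup M] [Module Λ M] [Module Γ M]
    (hM : ∀ (a : Λ) (x : M), φ a • x = a • x) (h : IsPresiltingModule Λ M) :
    IsPresiltingModule Γ M := by
  obtain ⟨P₁, P₀, _, _, _, _, d, π, hπ, hdπ, hfact⟩ := h
  refine ⟨.of Γ (φ.Reduction P₁), .of Γ (φ.Reduction P₀), inferInstance, inferInstance,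
    inferInstance, inferInstance, RingHom.Reduction.map φ d, RingHom.Reduction.lift φ hM π,
    .of_comp (g := RingHom.Reduction.mk φ) hπ,
    RingHom.Reduction.range_map_eq_ker_lift φ hM hdπ, fun k g => ?_⟩
  exact RingHom.Reduction.exists_comp_map_eq φ (Pi.ringHom_smul φ hM) g (hfact k _)

def IsLeftApproximation {Λ M : Type*} [Ring Λ] [AddCommGroup M] [Module Λ M] {n : ℕ}
    (f : Λ →ₗ[Λ] (Fin n → M)) : Prop :=
  ∀ (k : ℕ) (h : Λ →ₗ[Λ] (Fin k → M)), ∃ u : (Fin n → M) →ₗ[Λ] (Fin k → M), u.comp f = h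

theorem IsLeftApproximation.smul_eq_zero {Λ M : Type*} [Ring Λ] [AddCommGroup M] [Module Λ M]
    {n : ℕ} {f : Λ →ₗ[Λ] (Fin n → M)} (hf : IsLeftApproximation f) {a : Λ} (ha : f a = 0)
    (x : M) : a • x = 0 := by
  obtain ⟨u, hu⟩ := hf 1 (LinearMap.toSpanSingleton Λ _ fun _ => x)
  simpa [ha] using (congr_fun (LinearMap.congr_fun hu a) 0).symm

theorem IsLeftApproximation.exists_injective {Λ Γ M : Type*} [Ring Λ] [Ring Γ] (φ : Λ →+* Γ)
    (hφ : Surjective φ) [AddCommGroup M] [Module Λ M] [Module Γ M]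
    (hM : ∀ (a : Λ) (x : M), φ a • x = a • x) (hker : ∀ a : Λ, (∀ x : M, a • x = 0) → φ a = 0)
    {n : ℕ} {f : Λ →ₗ[Λ] (Fin n → M)} (hf : IsLeftApproximation f) :
    ∃ ι : Γ →ₗ[Γ] (Fin n → M), Injective ι ∧ ∀ a, ι (φ a) = f a := by
  have hι : ∀ a, LinearMap.toSpanSingleton Γ _ (f 1) (φ a) = f a := fun a => by
    rw [LinearMap.toSpanSingleton_apply, Pi.ringHom_smul φ hM, ← map_smul, smul_eq_mul, mul_one]
  refine ⟨_, (injective_iff_map_eq_zero _).mpr fun γ hγ => ?_, hι⟩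
  obtain ⟨a, rfl⟩ := hφ γ
  exact hker a (hf.smul_eq_zero (by rwa [hι] at hγ))

theorem silting_is_tilting_over_quotient_by_annihilator_general
    (Λ : Type u) [Ring Λ]
    (M : Type u) [AddCommGroup M] [Module Λ M]
    (Γ : Type u) [Ring Γ] (φ : Λ →+* Γ)
    (hφsurj : Function.Surjective φ)
    -- the kernel of `φ` is `I = ann_Λ(M)`
    (hker : ∀ a : Λ, φ a = 0 ↔ ∀ x : M, a • x = 0)
    [Module Γ M]
    -- the `Γ = Λ/I`-module structure on `M` is induced by the `Λ`-structure via `φ`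
    (hcompat : ∀ (a : Λ) (x : M), φ a • x = a • x)
    (hsilting : IsSiltingModule Λ M) :
    IsTiltingModule Γ M := by
  have : Fact (Surjective φ) := ⟨hφsurj⟩
  obtain ⟨hpre, n, m, f, g, e, hee, hge, hkerg, happrox⟩ := hsilting
  obtain ⟨ι, hι, hιf⟩ :=
    IsLeftApproximation.exists_injective φ hφsurj hcompat (fun a => (hker a).mpr) happrox
  obtain ⟨B₁, B₀, hB₁, hB₀, hfin₁, hfin₀, δ, π, hπ, hδπ, hfact⟩ := hpre.reduction φ hcompat
  let q := g.extendScalarsAlong φ (Pi.ringHom_smul φ hcompat) (Pi.ringHom_smul φ hcompat) hφsurj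
  let e' := e.extendScalarsAlong φ (Pi.ringHom_smul φ hcompat) (Pi.ringHom_smul φ hcompat) hφsurj
  refine ⟨⟨B₁, B₀, hB₁, hB₀, hfin₁, hfin₀, δ, π,
    LinearMap.injective_of_forall_exists_comp_eq hι (hfact n), hπ, hδπ, hfact⟩,
    n, m, ι, q, e', LinearMap.ext fun v => LinearMap.congr_fun hee v, ?_, hι, ?_⟩
  · refine SetLike.coe_injective ?_
    simpa only [LinearMap.coe_range, q, e', LinearMap.coe_extendScalarsAlong] using
      congrArg SetLike.coe hge
  · ext x
    rw [LinearMap.mem_ker, LinearMap.coe_extendScalarsAlong, ← LinearMap.mem_ker, hkerg,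
      LinearMap.mem_range, LinearMap.mem_range, hφsurj.exists]
    simp only [hιf]

/-- **A silting module is a tilting module over the quotient by its annihilator.**
Let `Λ` be a ring, `M` a finitely presented `Λ`-module, and `I = ann_Λ(M)`.
If `M` is a silting `Λ`-module, then `M` is a tilting `Λ/I`-module.  Here the
quotient `Λ/I` is represented by any ring `Γ` together with a surjective ring
homomorphism `φ : Λ → Γ` whose kernel is exactly the annihilator of `M`, and the
`Γ`-module structure of `M` is compatible with `φ`. -/
theorem silting_is_tilting_over_quotient_by_annihilator
    (Λ : Type u) [Ring Λ]
    (M : Type u) [AddCommGroup M] [Module Λ M] [Module.Finite Λ M]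
    (Γ : Type u) [Ring Γ] (φ : Λ →+* Γ)
    (hφsurj : Function.Surjective φ)
    -- the kernel of `φ` is `I = ann_Λ(M)`
    (hker : ∀ a : Λ, φ a = 0 ↔ ∀ x : M, a • x = 0)
    [Module Γ M]
    -- the `Γ = Λ/I`-module structure on `M` is induced by the `Λ`-structure via `φ`
    (hcompat : ∀ (a : Λ) (x : M), φ a • x = a • x)
    (hsilting : IsSiltingModule Λ M) :
    IsTiltingModule Γ M :=
  silting_is_tilting_over_quotient_by_annihilator_general Λ M Γ φ hφsurj hker hcompat hsilting
end

section
/- Let Λ be a ring and M a finitely presented Λ-module. Then M is a faithful silting Λ-module if and only if M is a tilting Λ-module. -/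
universe u

section Helpers
variable {Λ : Type u} [Ring Λ] {M : Type u} [AddCommGroup M] [Module Λ M]

lemma piProj (R : Type u) [Ring R] (Q : Type u) [AddCommGroup Q] [Module R Q]
    [Module.Projective R Q] (m : ℕ) : Module.Projective R (Fin m → Q) := by
  haveI : Module.Projective R (DirectSum (Fin m) (fun _ => Q)) :=
    inferInstanceAs (Module.Projective R (Π₀ _i : Fin m, Q))
  exact Module.Projective.of_equiv (DirectSum.linearEquivFunOnFintype R (Fin m) (fun _ => Q))

/-- Lemma 1: a left `add M`-approximation `Λ → Mⁿ` is injective when `M` is faithful. -/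
lemma inj_of_faithful {n : ℕ} (f : Λ →ₗ[Λ] (Fin n → M))
    (happrox : ∀ (k : ℕ) (h : Λ →ₗ[Λ] (Fin k → M)),
      ∃ u : (Fin n → M) →ₗ[Λ] (Fin k → M), u.comp f = h)
    (hfaith : ∀ a : Λ, (∀ x : M, a • x = 0) → a = 0) :
    Function.Injective f := by
  rw [← LinearMap.ker_eq_bot, eq_bot_iff]
  intro b hb
  have hb0 : f b = 0 := hb
  have : b = 0 := by
    apply hfaith
    intro x
    obtain ⟨u, hu⟩ := happrox 1 (LinearMap.pi fun _ : Fin 1 => LinearMap.toSpanSingleton Λ M x)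
    have := LinearMap.congr_fun hu b
    simp only [LinearMap.comp_apply, hb0, map_zero] at this
    have := congrFun this.symm 0
    simpa [LinearMap.toSpanSingleton] using this
  simp [this]

variable {Q₁ Q₀ : Type u} [AddCommGroup Q₁] [Module Λ Q₁] [AddCommGroup Q₀] [Module Λ Q₀]

lemma compLeft_surjective (π : Q₀ →ₗ[Λ] M) (hπ : Function.Surjective π) (m : ℕ) :
    Function.Surjective (π.compLeft (Fin m)) := by
  intro y
  choose p hp using fun j => hπ (y j)
  exact ⟨p, funext hp⟩

/-- Lemma 3: `range (dᵐ) = ker (πᵐ)`. -/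
lemma range_compLeft_eq_ker (d : Q₁ →ₗ[Λ] Q₀) (π : Q₀ →ₗ[Λ] M)
    (h : LinearMap.range d = LinearMap.ker π) (m : ℕ) :
    LinearMap.range (d.compLeft (Fin m)) = LinearMap.ker (π.compLeft (Fin m)) := by
  ext x
  simp only [LinearMap.mem_range, LinearMap.mem_ker]
  constructor
  · rintro ⟨t, rfl⟩
    funext j
    have : d (t j) ∈ LinearMap.ker π := h ▸ LinearMap.mem_range_self d (t j)
    simpa using this
  · intro hx
    have hx' : ∀ j, x j ∈ LinearMap.range d := by
      intro j
      rw [h, LinearMap.mem_ker]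
      exact congrFun hx j
    choose t ht using hx'
    exact ⟨t, funext ht⟩

/-- Lemma 2: lifting along the diagonal map `dᵐ` into powers of `M`. -/
lemma lift_pow (d : Q₁ →ₗ[Λ] Q₀)
    (hlift : ∀ (n : ℕ) (g : Q₁ →ₗ[Λ] (Fin n → M)),
      ∃ h : Q₀ →ₗ[Λ] (Fin n → M), h.comp d = g)
    (m k : ℕ) (g : (Fin m → Q₁) →ₗ[Λ] (Fin k → M)) :
    ∃ v : (Fin m → Q₀) →ₗ[Λ] (Fin k → M), v.comp (d.compLeft (Fin m)) = g := by
  choose c hc using fun j : Fin m =>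
    hlift k (g.comp (LinearMap.single Λ (fun _ : Fin m => Q₁) j))
  refine ⟨∑ j : Fin m, (c j).comp (LinearMap.proj j), ?_⟩
  apply LinearMap.ext
  intro t
  have h1 : ∀ j, c j (d (t j)) = g (Pi.single j (t j)) := by
    intro j
    have := LinearMap.congr_fun (hc j) (t j)
    simpa using this
  calc (∑ j : Fin m, (c j).comp (LinearMap.proj j)).comp (d.compLeft (Fin m)) t
      = ∑ j : Fin m, c j (d (t j)) := by
        simp [LinearMap.sum_apply, LinearMap.comp_apply, LinearMap.compLeft_apply]
    _ = ∑ j : Fin m, g (Pi.single j (t j)) := by simp [h1]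
    _ = g t := by rw [← map_sum, Finset.univ_sum_single]

end Helpers

section Chase
variable {Λ : Type u} [Ring Λ] {M : Type u} [AddCommGroup M] [Module Λ M]
variable {Q₁ Q₀ : Type u} [AddCommGroup Q₁] [Module Λ Q₁] [AddCommGroup Q₀] [Module Λ Q₀]



lemma approx_of_tilting [Module.Projective Λ Q₀]
    (d : Q₁ →ₗ[Λ] Q₀) (π : Q₀ →ₗ[Λ] M) (hπ : Function.Surjective π)
    (hdπ : LinearMap.range d = LinearMap.ker π)
    (hlift : ∀ (n : ℕ) (g : Q₁ →ₗ[Λ] (Fin n → M)),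
      ∃ h : Q₀ →ₗ[Λ] (Fin n → M), h.comp d = g)
    {n m : ℕ} (i : Λ →ₗ[Λ] (Fin n → M)) (q : (Fin n → M) →ₗ[Λ] (Fin m → M))
    (e : (Fin m → M) →ₗ[Λ] (Fin m → M))
    (he : e.comp e = e) (hqe : LinearMap.range q = LinearMap.range e)
    (hiq : LinearMap.range i = LinearMap.ker q)
    (hi : Function.Injective i)
    (k : ℕ) (h : Λ →ₗ[Λ] (Fin k → M)) :
    ∃ u : (Fin n → M) →ₗ[Λ] (Fin k → M), u.comp i = h := by
  haveI : Module.Projective Λ (Fin m → Q₀) := piProj Λ Q₀ m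
  set D : (Fin m → Q₁) →ₗ[Λ] (Fin m → Q₀) := d.compLeft (Fin m) with hD
  set Pi' : (Fin m → Q₀) →ₗ[Λ] (Fin m → M) := π.compLeft (Fin m) with hPi'
  have hPisurj : Function.Surjective Pi' := compLeft_surjective π hπ m
  have hee : ∀ y, e (e y) = e y := fun y => LinearMap.congr_fun he y
  obtain ⟨ehat, hehat⟩ := Module.projective_lifting_property Pi' (e.comp Pi') hPisurj
  have hehat' : ∀ p, Pi' (ehat p) = e (Pi' p) := fun p => LinearMap.congr_fun hehat p
  have hmem : ∀ p, (e.comp Pi') p ∈ LinearMap.range q := by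
    intro p; rw [hqe]; exact LinearMap.mem_range_self e (Pi' p)
  obtain ⟨ψ, hψ⟩ := Module.projective_lifting_property q.rangeRestrict
    (LinearMap.codRestrict (LinearMap.range q) (e.comp Pi') hmem)
    (LinearMap.surjective_rangeRestrict q)
  have hψ' : ∀ p, q (ψ p) = e (Pi' p) := by
    intro p
    have h1 := congrArg Subtype.val (LinearMap.congr_fun hψ p)
    simpa using h1
  set E : (Fin m → Q₀) →ₗ[Λ] (Fin m → M) := e.comp Pi' with hE
  set N : Submodule Λ (Fin m → Q₀) := LinearMap.ker E with hN
  have hEapp : ∀ p, E p = e (Pi' p) := fun p => rfl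
  have hψN : ∀ p : N, (ψ.comp N.subtype) p ∈ LinearMap.range i := by
    intro p
    rw [hiq, LinearMap.mem_ker]
    have : q (ψ (p : Fin m → Q₀)) = e (Pi' (p : Fin m → Q₀)) := hψ' _
    have hp2 : E (p : Fin m → Q₀) = 0 := p.2
    rw [hEapp] at hp2
    simpa [LinearMap.comp_apply, hp2] using this
  set a : N →ₗ[Λ] Λ :=
    ((LinearEquiv.ofInjective i hi).symm.toLinearMap).comp
      (LinearMap.codRestrict (LinearMap.range i) (ψ.comp N.subtype) hψN) with ha
  have haspec : ∀ p : N, i (a p) = ψ (p : Fin m → Q₀) := by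
    intro p
    have h2 : (LinearEquiv.ofInjective i hi) (a p)
        = LinearMap.codRestrict (LinearMap.range i) (ψ.comp N.subtype) hψN p := by
      simp [ha, LinearMap.comp_apply]
    have h3 := congrArg Subtype.val h2
    simpa [LinearEquiv.ofInjective_apply] using h3
  have hDN : ∀ t, D t ∈ N := by
    intro t
    have hPiD : Pi' (D t) = 0 := by
      funext j
      have hmem2 : d (t j) ∈ LinearMap.ker π := hdπ ▸ LinearMap.mem_range_self d (t j)
      simpa [hPi', hD, LinearMap.compLeft_apply] using hmem2
    simp [hN, LinearMap.mem_ker, hEapp, hPiD]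
  set DtoN : (Fin m → Q₁) →ₗ[Λ] N := LinearMap.codRestrict N D hDN with hDtoN
  obtain ⟨v₁, hv₁⟩ := lift_pow d hlift m k (h.comp (a.comp DtoN))
  have hv₁' : ∀ t, v₁ (D t) = h (a (DtoN t)) := fun t => LinearMap.congr_fun hv₁ t
  have hρN : ∀ p, ((LinearMap.id : (Fin m → Q₀) →ₗ[Λ] (Fin m → Q₀)) - ehat) p ∈ N := by
    intro p
    have : E (p - ehat p) = 0 := by
      rw [map_sub, hEapp, hEapp, hehat' p, hee, sub_self]
    simpa [hN, LinearMap.mem_ker, LinearMap.sub_apply] using this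
  set ρ : (Fin m → Q₀) →ₗ[Λ] N := LinearMap.codRestrict N ((LinearMap.id : (Fin m → Q₀) →ₗ[Λ] (Fin m → Q₀)) - ehat) hρN with hρ
  set v : (Fin m → Q₀) →ₗ[Λ] (Fin k → M) := v₁.comp ehat + h.comp (a.comp ρ) with hv
  set s : (Λ × (Fin m → Q₀)) →ₗ[Λ] (Fin n → M) := i.coprod ψ with hs
  set τ : (Λ × (Fin m → Q₀)) →ₗ[Λ] (Fin k → M) := h.coprod v with hτ
  have hssurj : Function.Surjective s := by
    intro x
    obtain ⟨y, hy⟩ : q x ∈ LinearMap.range e := hqe ▸ LinearMap.mem_range_self q x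
    obtain ⟨p, hp⟩ := hPisurj y
    have hqx : q (x - ψ p) = 0 := by
      rw [map_sub, hψ' p, hp, hy, sub_self]
    obtain ⟨b, hb⟩ : x - ψ p ∈ LinearMap.range i := hiq ▸ LinearMap.mem_ker.mpr hqx
    refine ⟨(b, p), ?_⟩
    simp only [hs, LinearMap.coprod_apply, hb]
    abel
  have hker : LinearMap.ker s ≤ LinearMap.ker τ := by
    rintro ⟨b, p⟩ hbp
    have hbp' : i b + ψ p = 0 := hbp
    have hψp : ψ p = -(i b) := by
      rw [eq_neg_iff_add_eq_zero, add_comm]; exact hbp'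
    have hqib : q (i b) = 0 := by
      have : i b ∈ LinearMap.ker q := hiq ▸ LinearMap.mem_range_self i b
      exact this
    have hpN : p ∈ N := by
      have : E p = 0 := by
        rw [hEapp, ← hψ' p, hψp, map_neg, hqib, neg_zero]
      simpa [hN, LinearMap.mem_ker] using this
    have hehatker : ehat p ∈ LinearMap.ker Pi' := by
      rw [LinearMap.mem_ker, hehat' p]
      have : E p = 0 := hpN
      rw [hEapp] at this
      exact this
    obtain ⟨t, ht⟩ : ehat p ∈ LinearMap.range D :=
      (range_compLeft_eq_ker d π hdπ m) ▸ hehatker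
    have hsum : DtoN t + ρ p = ⟨p, hpN⟩ := by
      apply Subtype.ext
      have : D t + (p - ehat p) = p := by rw [ht]; abel
      simpa [hDtoN, hρ, LinearMap.codRestrict_apply, LinearMap.sub_apply] using this
    have hvp : v p = h (a ⟨p, hpN⟩) := by
      have : v p = v₁ (ehat p) + h (a (ρ p)) := rfl
      rw [this, ← ht, hv₁' t, ← map_add, ← map_add, hsum]
    have hap : a ⟨p, hpN⟩ = -b := by
      apply hi
      rw [haspec ⟨p, hpN⟩, map_neg]
      exact hψp
    show τ (b, p) = 0
    have : τ (b, p) = h b + v p := rfl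
    rw [this, hvp, hap, map_neg, add_neg_cancel]
  set equivS := s.quotKerEquivOfSurjective hssurj with hequivS
  set u : (Fin n → M) →ₗ[Λ] (Fin k → M) :=
    ((LinearMap.ker s).liftQ τ hker).comp equivS.symm.toLinearMap with hu
  have hus : ∀ x, u (s x) = τ x := by
    intro x
    have hq1 : equivS (Submodule.Quotient.mk x) = s x := by
      simp [hequivS, LinearMap.quotKerEquivOfSurjective]
    have hq2 : equivS.symm (s x) = Submodule.Quotient.mk x := by
      rw [← hq1, LinearEquiv.symm_apply_apply]
    rw [hu]
    simp only [LinearMap.comp_apply, LinearEquiv.coe_toLinearMap, hq2, Submodule.liftQ_apply]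
  refine ⟨u, ?_⟩
  apply LinearMap.ext
  intro b
  have hib : i b = s (b, 0) := by
    simp [hs, LinearMap.coprod_apply]
  rw [LinearMap.comp_apply, hib, hus]
  show h b + v 0 = h b
  rw [map_zero, add_zero]

end Chase

section InjD
variable {Λ : Type u} [Ring Λ] {M : Type u} [AddCommGroup M] [Module Λ M]

/-- If `Λ` embeds in a finite power of `M`, then the first differential of the presilting
presentation of `M` is injective. -/
lemma d_inj {P₁ P₀ : Type u} [AddCommGroup P₁] [Module Λ P₁] [AddCommGroup P₀] [Module Λ P₀]
    [Module.Projective Λ P₁] [Module.Finite Λ P₁]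
    {n : ℕ} (f : Λ →ₗ[Λ] (Fin n → M)) (hf : Function.Injective f)
    (d : P₁ →ₗ[Λ] P₀)
    (hlift : ∀ (k : ℕ) (g : P₁ →ₗ[Λ] (Fin k → M)),
      ∃ h : P₀ →ₗ[Λ] (Fin k → M), h.comp d = g) :
    Function.Injective d := by
  obtain ⟨k, φ, hφ⟩ := Module.Finite.exists_fin' Λ P₁
  obtain ⟨sec, hsec⟩ := Module.projective_lifting_property φ LinearMap.id hφ
  have hsecinj : Function.Injective sec := by
    intro x y hxy
    have hx := LinearMap.congr_fun hsec x
    have hy := LinearMap.congr_fun hsec y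
    simp only [LinearMap.comp_apply, LinearMap.id_apply] at hx hy
    rw [← hx, ← hy, hxy]
  have hcompinj : Function.Injective (f.compLeft (Fin k)) := by
    intro x y hxy
    funext j
    exact hf (congrFun hxy j)
  set c : (Fin k → Fin n → M) ≃ₗ[Λ] (Fin k × Fin n → M) :=
    (LinearEquiv.curry Λ M (Fin k) (Fin n)).symm with hc
  set fl : (Fin k × Fin n → M) →ₗ[Λ] (Fin (k * n) → M) :=
    LinearMap.funLeft Λ M (fun j => finProdFinEquiv.symm j) with hfl
  have hflinj : Function.Injective fl :=
    LinearMap.funLeft_injective_of_surjective Λ M _ (fun p => ⟨finProdFinEquiv p, by simp⟩)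
  set j : P₁ →ₗ[Λ] (Fin (k * n) → M) :=
    fl.comp (c.toLinearMap.comp ((f.compLeft (Fin k)).comp sec)) with hj
  have hjinj : Function.Injective j := by
    have : ⇑j = ⇑fl ∘ ⇑c ∘ ⇑(f.compLeft (Fin k)) ∘ ⇑sec := by
      rw [hj]; rfl
    rw [this]
    exact hflinj.comp (c.injective.comp (hcompinj.comp hsecinj))
  obtain ⟨H, hH⟩ := hlift (k * n) j
  intro x y hxy
  apply hjinj
  have hx := LinearMap.congr_fun hH x
  have hy := LinearMap.congr_fun hH y
  simp only [LinearMap.comp_apply] at hx hy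
  rw [← hx, ← hy, hxy]

end InjD


/-- **Faithful silting modules are exactly tilting modules.**
Let `Λ` be a ring and `M` a finitely presented `Λ`-module.  Then `M` is a faithful
silting `Λ`-module if and only if `M` is a tilting `Λ`-module. -/
theorem faithful_silting_iff_tilting
    (Λ : Type u) [Ring Λ]
    (M : Type u) [AddCommGroup M] [Module Λ M] [Module.Finite Λ M] :
    (IsSiltingModule Λ M ∧ ∀ a : Λ, (∀ x : M, a • x = 0) → a = 0) ↔
      IsTiltingModule Λ M := by
  constructor
  · rintro ⟨⟨⟨P₁, P₀, hP₁proj, hP₀proj, hP₁fin, hP₀fin, d, π, hπsurj, hdπ, hlift⟩,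
      n, m, f, g, e, he, hge, hkg, happrox⟩, hfaith⟩
    haveI := hP₁proj; haveI := hP₀proj; haveI := hP₁fin; haveI := hP₀fin
    have hfinj : Function.Injective f := inj_of_faithful f happrox hfaith
    have hdinj : Function.Injective d := d_inj f hfinj d hlift
    exact ⟨⟨P₁, P₀, hP₁proj, hP₀proj, hP₁fin, hP₀fin, d, π, hdinj, hπsurj, hdπ, hlift⟩,
      n, m, f, g, e, he, hge, hfinj, hkg.symm⟩
  · rintro ⟨⟨Q₁, Q₀, hQ₁proj, hQ₀proj, hQ₁fin, hQ₀fin, d, π, hdinj, hπsurj, hdπ, hlift⟩,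
      n, m, i, q, e, he, hqe, hiinj, hiq⟩
    haveI := hQ₁proj; haveI := hQ₀proj; haveI := hQ₁fin; haveI := hQ₀fin
    refine ⟨⟨⟨Q₁, Q₀, hQ₁proj, hQ₀proj, hQ₁fin, hQ₀fin, d, π, hπsurj, hdπ, hlift⟩,
      n, m, i, q, e, he, hqe, hiq.symm, ?_⟩, ?_⟩
    · intro k h
      exact approx_of_tilting d π hπsurj hdπ hlift i q e he hqe hiq hiinj k h
    · intro a ha
      have h1 : i a = 0 := by
        have : i a = a • i 1 := by
          rw [← map_smul, smul_eq_mul, mul_one]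
        rw [this]
        funext j
        exact ha (i 1 j)
      have := hiinj (h1.trans (map_zero i).symm)
      exact this
end

section
/- Let R be a commutative complete local noetherian ring and Λ a module-finite R-algebra. Let T be a torsion class of mod Λ. If there exists a left T-approximation f : Λ → M of Λ (i.e., M ∈ T and every morphism from Λ to an object of T factors through f), then T = Fac M. -/
/-!
Since `T` is closed under extensions and `M ∈ T`, every `Mⁿ` lies in `T`, so closure under
quotients gives `Fac M ⊆ T`. Conversely, `fⁿ : Λⁿ → Mⁿ` is again a left `T`-approximation,
so an epimorphism `Λⁿ → X` onto `X ∈ T` factors through `fⁿ`, making `X` a quotient of `Mⁿ`.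
-/

universe u

open IsLocalRing

namespace ModuleCat

variable {Λ : Type u} [Ring Λ]

def IsClosedUnderQuotients (T : Set (ModuleCat.{u} Λ)) : Prop :=
  ∀ X ∈ T, ∀ Y : ModuleCat.{u} Λ, Module.Finite Λ Y →
    ∀ p : X →ₗ[Λ] Y, Function.Surjective p → Y ∈ T

def IsClosedUnderExtensions (T : Set (ModuleCat.{u} Λ)) : Prop :=
  ∀ X ∈ T, ∀ Z ∈ T, ∀ Y : ModuleCat.{u} Λ, Module.Finite Λ Y →
    ∀ (i : X →ₗ[Λ] Y) (p : Y →ₗ[Λ] Z),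
      Function.Injective i → Function.Surjective p →
      LinearMap.range i = LinearMap.ker p → Y ∈ T

def IsLeftApproximation (T : Set (ModuleCat.{u} Λ)) {A B : Type*}
    [AddCommGroup A] [Module Λ A] [AddCommGroup B] [Module Λ B] (f : A →ₗ[Λ] B) : Prop :=
  ∀ X ∈ T, ∀ h : A →ₗ[Λ] X, ∃ u : B →ₗ[Λ] X, u.comp f = h

variable {T : Set (ModuleCat.{u} Λ)}

theorem IsClosedUnderQuotients.of_linearEquiv (hT : IsClosedUnderQuotients T)
    {X Y : ModuleCat.{u} Λ} (hX : X ∈ T) [Module.Finite Λ Y] (e : X ≃ₗ[Λ] Y) : Y ∈ T :=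
  hT X hX Y inferInstance e e.surjective

theorem IsClosedUnderExtensions.prod_mem (hT : IsClosedUnderExtensions T)
    {X Z : ModuleCat.{u} Λ} (hX : X ∈ T) (hZ : Z ∈ T) [Module.Finite Λ X] [Module.Finite Λ Z] :
    ModuleCat.of Λ (X × Z) ∈ T :=
  hT X hX Z hZ _ inferInstance (LinearMap.inl Λ X Z) (LinearMap.snd Λ X Z)
    LinearMap.inl_injective LinearMap.snd_surjective (LinearMap.range_inl Λ X Z)

theorem pi_fin_mem (hquot : IsClosedUnderQuotients T) (hext : IsClosedUnderExtensions T)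
    {M : ModuleCat.{u} Λ} (hM : M ∈ T) [Module.Finite Λ M] (n : ℕ) :
    ModuleCat.of Λ (Fin n → M) ∈ T := by
  induction n with
  | zero => exact hquot M hM _ inferInstance 0 fun _ ↦ ⟨0, Subsingleton.elim _ _⟩
  | succ n ih =>
    have hprod : ModuleCat.of Λ (M × (Fin n → M)) ∈ T := hext.prod_mem hM ih
    exact hquot.of_linearEquiv hprod (Fin.consLinearEquiv Λ fun _ : Fin (n + 1) ↦ M)

theorem IsLeftApproximation.compLeft {A B : Type*} [AddCommGroup A] [Module Λ A]
    [AddCommGroup B] [Module Λ B] {f : A →ₗ[Λ] B} (hf : IsLeftApproximation T f)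
    (ι : Type*) [Fintype ι] [DecidableEq ι] : IsLeftApproximation T (f.compLeft ι) := by
  intro X hX h
  choose u hu using fun i ↦ hf X hX (h ∘ₗ LinearMap.single Λ (fun _ ↦ A) i)
  refine ⟨LinearMap.lsum Λ (fun _ ↦ B) ℕ u, LinearMap.pi_ext' fun i ↦ ?_⟩
  ext a
  simpa [Pi.single_apply, apply_ite] using congr($(hu i) a)

theorem IsLeftApproximation.exists_surjective_pi_fin {M : ModuleCat.{u} Λ} {f : Λ →ₗ[Λ] M}
    (hf : IsLeftApproximation T f) {X : ModuleCat.{u} Λ} (hX : X ∈ T) [Module.Finite Λ X] :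
    ∃ (n : ℕ) (p : (Fin n → M) →ₗ[Λ] X), Function.Surjective p := by
  obtain ⟨n, π, hπ⟩ := Module.Finite.exists_fin' Λ X
  obtain ⟨u, hu⟩ := hf.compLeft (Fin n) X hX π
  exact ⟨n, u, Function.Surjective.of_comp (hu ▸ hπ)⟩

end ModuleCat

open ModuleCat in
theorem torsionClass_eq_fac_of_leftApproximation_general
    (Λ : Type u) [Ring Λ]
    (T : Set (ModuleCat.{u} Λ))
    -- every member of `T` is finitely generated
    (hfg : ∀ X ∈ T, Module.Finite Λ X)
    -- `T` is closed under factor modules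
    (hquot : ∀ X ∈ T, ∀ Y : ModuleCat.{u} Λ, Module.Finite Λ Y →
      ∀ p : X →ₗ[Λ] Y, Function.Surjective p → Y ∈ T)
    -- `T` is closed under extensions
    (hext : ∀ X ∈ T, ∀ Z ∈ T, ∀ Y : ModuleCat.{u} Λ, Module.Finite Λ Y →
      ∀ (i : X →ₗ[Λ] Y) (p : Y →ₗ[Λ] Z),
        Function.Injective i → Function.Surjective p →
        LinearMap.range i = LinearMap.ker p → Y ∈ T)
    -- a left `T`-approximation `f : Λ → M` of `Λ`
    (M : ModuleCat.{u} Λ) (hM : M ∈ T) (f : Λ →ₗ[Λ] M)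
    (happrox : ∀ X ∈ T, ∀ h : Λ →ₗ[Λ] X, ∃ u : M →ₗ[Λ] X, u.comp f = h) :
    -- then `T = Fac M`
    ∀ X : ModuleCat.{u} Λ, Module.Finite Λ X →
      (X ∈ T ↔ ∃ (n : ℕ) (p : (Fin n → M) →ₗ[Λ] X), Function.Surjective p) := by
  have : Module.Finite Λ M := hfg M hM
  have happrox : IsLeftApproximation T f := happrox
  intro X hX
  constructor
  · intro hXT
    exact happrox.exists_surjective_pi_fin hXT
  · rintro ⟨n, p, hp⟩
    exact hquot _ (pi_fin_mem hquot hext hM n) X hX p hp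

/-- **A torsion class admitting a left approximation of `Λ` is generated by the
approximation.**  Let `R` be a commutative complete local noetherian ring and `Λ` a
module-finite `R`-algebra.  Let `T` be a torsion class of `mod Λ` (a class of finitely
generated modules closed under factor modules and extensions).  If there exists a left
`T`-approximation `f : Λ → M` of `Λ`, then `T = Fac M`. -/
theorem torsionClass_eq_fac_of_leftApproximation
    (R : Type u) [CommRing R] [IsNoetherianRing R] [IsLocalRing R]
    [IsAdicComplete (maximalIdeal R) R]
    (Λ : Type u) [Ring Λ] [Algebra R Λ] [Module.Finite R Λ]
    (T : Set (ModuleCat.{u} Λ))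
    -- every member of `T` is finitely generated
    (hfg : ∀ X ∈ T, Module.Finite Λ X)
    -- `T` is closed under factor modules
    (hquot : ∀ X ∈ T, ∀ Y : ModuleCat.{u} Λ, Module.Finite Λ Y →
      ∀ p : X →ₗ[Λ] Y, Function.Surjective p → Y ∈ T)
    -- `T` is closed under extensions
    (hext : ∀ X ∈ T, ∀ Z ∈ T, ∀ Y : ModuleCat.{u} Λ, Module.Finite Λ Y →
      ∀ (i : X →ₗ[Λ] Y) (p : Y →ₗ[Λ] Z),
        Function.Injective i → Function.Surjective p →
        LinearMap.range i = LinearMap.ker p → Y ∈ T)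
    -- a left `T`-approximation `f : Λ → M` of `Λ`
    (M : ModuleCat.{u} Λ) (hM : M ∈ T) (f : Λ →ₗ[Λ] M)
    (happrox : ∀ X ∈ T, ∀ h : Λ →ₗ[Λ] X, ∃ u : M →ₗ[Λ] X, u.comp f = h) :
    -- then `T = Fac M`
    ∀ X : ModuleCat.{u} Λ, Module.Finite Λ X →
      (X ∈ T ↔ ∃ (n : ℕ) (p : (Fin n → M) →ₗ[Λ] X), Function.Surjective p) :=
  torsionClass_eq_fac_of_leftApproximation_general Λ T hfg hquot hext M hM f happrox
end

section
/- Let R be a commutative local noetherian ring with maximal ideal m, Λ a module-finite R-algebra, and I a two-sided ideal of Λ with I ⊆ mΛ. For two-term complexes P, Q of finitely generated projective Λ-modules, Hom_{K^b(proj Λ)}(P, Q[1]) = 0 if and only if Hom_{K^b(proj Λ/I)}(P̄, Q̄[1]) = 0, where P̄ and Q̄ denote the reductions Λ/I ⊗_Λ P and Λ/I ⊗_Λ Q. -/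
open IsLocalRing Submodule

/-! A finitely generated projective `P₁` is a retract of some `Λⁿ`, so `Hom_Λ(P₁, Q₀)` is a retract
of `Q₀ⁿ`: it is a finitely generated `R`-module, and a map `P₁ → Q₀` with values in `m • Q₀` lies
in `m • Hom_Λ(P₁, Q₀)`. As `I • Q₀ ⊆ m • Q₀`, the hypothesis on the right says that `γ` is
surjective modulo `m • Hom_Λ(P₁, Q₀)`, and Nakayama's lemma makes `γ` surjective. -/

section

variable {R Λ : Type*} [CommRing R] [Ring Λ] [Algebra R Λ]

section SMulTop

variable {N : Type*} [AddCommGroup N] [Module Λ N] [Module R N] [IsScalarTower R Λ N]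
  (J : Ideal R)

theorem mem_smul_top_of_mem_span_smul {I : Ideal Λ}
    (hIJ : I ≤ span Λ (algebraMap R Λ '' J)) {x : N}
    (hx : x ∈ span Λ {x : N | ∃ i ∈ I, ∃ q : N, x = i • q}) :
    x ∈ J • (⊤ : Submodule R N) := by
  let T : Submodule Λ N :=
    { (J • ⊤ : Submodule R N) with
      smul_mem' := fun l _ hx ↦
        smul_top_le_comap_smul_top J (DistribSMul.toLinearMap R N l) hx }
  have hT (q : N) : span Λ (algebraMap R Λ '' J) ≤ T.comap (LinearMap.toSpanSingleton Λ N q) := by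
    refine span_le.2 ?_
    rintro _ ⟨r, hr, rfl⟩
    show algebraMap R Λ r • q ∈ (J • ⊤ : Submodule R N)
    rw [algebraMap_smul]
    exact smul_mem_smul hr mem_top
  refine (span_le (p := T)).2 ?_ hx
  rintro _ ⟨i, hi, q, rfl⟩
  exact hT q (hIJ hi)

end SMulTop

section Hom

variable {P N : Type*} [AddCommGroup P] [Module Λ P]
  [AddCommGroup N] [Module Λ N] [Module R N] [IsScalarTower R Λ N]

theorem LinearMap.lcomp_comp_of_comp_eq_id {F : Type*} [AddCommGroup F] [Module Λ F]
    {π : F →ₗ[Λ] P} {σ : P →ₗ[Λ] F} (hπσ : π ∘ₗ σ = .id) (h : P →ₗ[Λ] N) :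
    LinearMap.lcomp R N σ (h ∘ₗ π) = h := by
  rw [LinearMap.lcomp_apply', LinearMap.comp_assoc, hπσ, LinearMap.comp_id]

theorem mem_smul_top_of_forall_apply_mem_of_free {F : Type*} [AddCommGroup F] [Module Λ F]
    [Module.Free Λ F] [Module.Finite Λ F] (J : Ideal R) (h : F →ₗ[Λ] N)
    (hh : ∀ x, h x ∈ J • (⊤ : Submodule R N)) :
    h ∈ J • (⊤ : Submodule R (F →ₗ[Λ] N)) := by
  let b := Module.Free.chooseBasis Λ F
  rw [← b.constr_self R h, ← Finset.univ_sum_single (fun i ↦ h (b i)), map_sum]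
  exact sum_mem fun i _ ↦ smul_top_le_comap_smul_top J
    ((b.constr R).toLinearMap ∘ₗ LinearMap.single R (fun _ ↦ N) i) (hh _)

variable [Module.Finite Λ P] [Module.Projective Λ P]

instance Module.Finite.linearMap_of_projective [Module.Finite R N] :
    Module.Finite R (P →ₗ[Λ] N) := by
  obtain ⟨_, π, _, -, -, hπσ⟩ := Module.Finite.exists_comp_eq_id_of_projective Λ P
  exact Module.Finite.of_surjective _ fun h ↦
    ⟨h ∘ₗ π, LinearMap.lcomp_comp_of_comp_eq_id (R := R) hπσ h⟩

theorem mem_smul_top_of_forall_apply_mem (J : Ideal R) (h : P →ₗ[Λ] N)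
    (hh : ∀ p, h p ∈ J • (⊤ : Submodule R N)) :
    h ∈ J • (⊤ : Submodule R (P →ₗ[Λ] N)) := by
  obtain ⟨_, π, _, -, -, hπσ⟩ := Module.Finite.exists_comp_eq_id_of_projective Λ P
  rw [← LinearMap.lcomp_comp_of_comp_eq_id (R := R) hπσ h]
  exact smul_top_le_comap_smul_top J _ <|
    mem_smul_top_of_forall_apply_mem_of_free J (h ∘ₗ π) fun x ↦ hh (π x)

end Hom

theorem LinearMap.surjective_of_forall_sub_mem_smul_top {M H : Type*} [AddCommGroup M] [Module R M]
    [AddCommGroup H] [Module R H] [Module.Finite R H] (γ : M →ₗ[R] H) {J : Ideal R}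
    (hJ : J ≤ Ideal.jacobson ⊥) (hγ : ∀ y, ∃ x, y - γ x ∈ J • (⊤ : Submodule R H)) :
    Function.Surjective γ := by
  rw [← LinearMap.range_eq_top, eq_top_iff]
  refine le_of_le_smul_of_le_jacobson_bot Module.Finite.fg_top hJ fun y _ ↦ ?_
  obtain ⟨x, hx⟩ := hγ y
  simpa using add_mem_sup (LinearMap.mem_range_self γ x) hx

section TwoTerm

variable (R) {P₁ P₀ Q₁ Q₀ : Type*} [AddCommGroup P₁] [Module Λ P₁] [AddCommGroup P₀] [Module Λ P₀]
  [AddCommGroup Q₁] [Module Λ Q₁] [Module R Q₁] [IsScalarTower R Λ Q₁]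
  [AddCommGroup Q₀] [Module Λ Q₀] [Module R Q₀] [IsScalarTower R Λ Q₀]
  (α : P₁ →ₗ[Λ] P₀) (β : Q₁ →ₗ[Λ] Q₀)

/-- The map `γ`: its cokernel is `Hom_K(P, Q[1])` for `P = (P₁ → P₀)`, `Q = (Q₁ → Q₀)`. -/
def twoTermHomDiff : (P₁ →ₗ[Λ] Q₁) × (P₀ →ₗ[Λ] Q₀) →ₗ[R] P₁ →ₗ[Λ] Q₀ :=
  (-LinearMap.compRight R β).coprod (LinearMap.lcomp R Q₀ α)

theorem twoTermHomDiff_apply (f : P₁ →ₗ[Λ] Q₁) (g : P₀ →ₗ[Λ] Q₀) :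
    twoTermHomDiff R α β (f, g) = g ∘ₗ α - β ∘ₗ f := by
  simp [twoTermHomDiff, LinearMap.lcomp_apply', neg_add_eq_sub]

theorem twoTermHomDiff_surjective [Module.Finite Λ P₁] [Module.Projective Λ P₁]
    [Module.Finite R Q₀] {J : Ideal R} (hJ : J ≤ Ideal.jacobson ⊥) {I : Ideal Λ}
    (hIJ : I ≤ span Λ (algebraMap R Λ '' J))
    (H : ∀ h : P₁ →ₗ[Λ] Q₀, ∃ (f : P₁ →ₗ[Λ] Q₁) (g : P₀ →ₗ[Λ] Q₀), ∀ p : P₁,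
      h p - (g (α p) - β (f p)) ∈ span Λ {x : Q₀ | ∃ i ∈ I, ∃ q : Q₀, x = i • q}) :
    Function.Surjective (twoTermHomDiff R α β) := by
  refine (twoTermHomDiff R α β).surjective_of_forall_sub_mem_smul_top hJ fun h ↦ ?_
  obtain ⟨f, g, hfg⟩ := H h
  refine ⟨(f, g), mem_smul_top_of_forall_apply_mem J _ fun p ↦ ?_⟩
  simpa [twoTermHomDiff_apply] using mem_smul_top_of_mem_span_smul J hIJ (hfg p)

end TwoTerm

end

theorem hom_two_term_vanishing_iff_reduction_general
    (R : Type*) [CommRing R] [IsLocalRing R]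
    (Λ : Type*) [Ring Λ] [Algebra R Λ] [Module.Finite R Λ]
    (I : Ideal Λ)
    (hImΛ : I ≤ Submodule.span Λ ((algebraMap R Λ) '' (maximalIdeal R : Set R)))
    (P₁ P₀ Q₁ Q₀ : Type*)
    [AddCommGroup P₁] [Module Λ P₁] [Module.Finite Λ P₁] [Module.Projective Λ P₁]
    [AddCommGroup P₀] [Module Λ P₀]
    [AddCommGroup Q₁] [Module Λ Q₁]
    [AddCommGroup Q₀] [Module Λ Q₀] [Module.Finite Λ Q₀]
    (α : P₁ →ₗ[Λ] P₀) (β : Q₁ →ₗ[Λ] Q₀)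
    -- `I·Q₀`
    (NQ₀ : Submodule Λ Q₀)
    (hNQ₀ : NQ₀ = Submodule.span Λ {x : Q₀ | ∃ i ∈ I, ∃ q : Q₀, x = i • q}) :
    -- `Hom_{K(Λ)}(P, Q[1]) = 0 ↔ Hom_{K(Λ/I)}(P̄, Q̄[1]) = 0`
    ((∀ h : P₁ →ₗ[Λ] Q₀, ∃ (f : P₁ →ₗ[Λ] Q₁) (g : P₀ →ₗ[Λ] Q₀),
        h = g.comp α - β.comp f) ↔
      (∀ h : P₁ →ₗ[Λ] Q₀, ∃ (f : P₁ →ₗ[Λ] Q₁) (g : P₀ →ₗ[Λ] Q₀),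
        ∀ p : P₁, h p - (g (α p) - β (f p)) ∈ NQ₀)) := by
  refine ⟨fun H h ↦ ?_, fun H h ↦ ?_⟩
  · obtain ⟨f, g, rfl⟩ := H h
    exact ⟨f, g, fun p ↦ by simp⟩
  let : Module R Q₁ := Module.compHom Q₁ (algebraMap R Λ)
  let : Module R Q₀ := Module.compHom Q₀ (algebraMap R Λ)
  have : IsScalarTower R Λ Q₁ := .of_algebraMap_smul fun _ _ ↦ rfl
  have : IsScalarTower R Λ Q₀ := .of_algebraMap_smul fun _ _ ↦ rfl
  have : Module.Finite R Q₀ := .trans Λ Q₀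
  subst hNQ₀
  obtain ⟨⟨f, g⟩, hfg⟩ :=
    twoTermHomDiff_surjective R α β (maximalIdeal_le_jacobson ⊥) hImΛ H h
  exact ⟨f, g, by rw [← hfg, twoTermHomDiff_apply]⟩

/-- **Nakayama reduction for `Hom(P, Q[1])` of 2-term complexes.**
Let `R` be a commutative local noetherian ring with maximal ideal `m`, `Λ` a
module-finite `R`-algebra, and `I` a two-sided ideal of `Λ` with `I ⊆ mΛ`.
For two-term complexes `P = (P₁ --α--> P₀)`, `Q = (Q₁ --β--> Q₀)` of finitely
generated projective `Λ`-modules, `Hom_{K^b(proj Λ)}(P, Q[1]) = 0` if and only if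
`Hom_{K^b(proj Λ/I)}(P̄, Q̄[1]) = 0`.  The first condition is the surjectivity of
`γ(f,g) = g∘α − β∘f`, and the second (via projectivity) says that every
`h : P₁ → Q₀` agrees with some `γ(f,g)` up to a map with values in `I·Q₀`. -/
theorem hom_two_term_vanishing_iff_reduction
    (R : Type*) [CommRing R] [IsNoetherianRing R] [IsLocalRing R]
    (Λ : Type*) [Ring Λ] [Algebra R Λ] [Module.Finite R Λ]
    (I : Ideal Λ) (hI_twosided : ∀ a ∈ I, ∀ b : Λ, a * b ∈ I)
    (hImΛ : I ≤ Submodule.span Λ ((algebraMap R Λ) '' (maximalIdeal R : Set R)))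
    (P₁ P₀ Q₁ Q₀ : Type*)
    [AddCommGroup P₁] [Module Λ P₁] [Module.Finite Λ P₁] [Module.Projective Λ P₁]
    [AddCommGroup P₀] [Module Λ P₀] [Module.Finite Λ P₀] [Module.Projective Λ P₀]
    [AddCommGroup Q₁] [Module Λ Q₁] [Module.Finite Λ Q₁] [Module.Projective Λ Q₁]
    [AddCommGroup Q₀] [Module Λ Q₀] [Module.Finite Λ Q₀] [Module.Projective Λ Q₀]
    (α : P₁ →ₗ[Λ] P₀) (β : Q₁ →ₗ[Λ] Q₀)
    -- `I·Q₀`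
    (NQ₀ : Submodule Λ Q₀)
    (hNQ₀ : NQ₀ = Submodule.span Λ {x : Q₀ | ∃ i ∈ I, ∃ q : Q₀, x = i • q}) :
    -- `Hom_{K(Λ)}(P, Q[1]) = 0 ↔ Hom_{K(Λ/I)}(P̄, Q̄[1]) = 0`
    ((∀ h : P₁ →ₗ[Λ] Q₀, ∃ (f : P₁ →ₗ[Λ] Q₁) (g : P₀ →ₗ[Λ] Q₀),
        h = g.comp α - β.comp f) ↔
      (∀ h : P₁ →ₗ[Λ] Q₀, ∃ (f : P₁ →ₗ[Λ] Q₁) (g : P₀ →ₗ[Λ] Q₀),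
        ∀ p : P₁, h p - (g (α p) - β (f p)) ∈ NQ₀)) :=
  hom_two_term_vanishing_iff_reduction_general R Λ I hImΛ P₁ P₀ Q₁ Q₀ α β NQ₀ hNQ₀
end
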